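/- arXiv:math/9906217 — 10 statements merged into one kernel-verified Lean document; each statement's English description precedes it below -/
import Mathlib

section
/- Suppose that G is a finitely generated abelian group of torsion-free rank r, that the kernel of φ' is finite, and that Nat.card G[2] · (Nat.card (G'[φ'] / φ(G[ε])))² · Nat.card (G[ε] / ε(G[2])) = 2⁴. Then the quotient groups G'/φ(G) and G/φ'(G') are finite and 2^(4+r) = (Nat.card (G'/φ(G)))² · (Nat.card (G/φ'(G')))². -/
/-!
For homomorphisms `f : A → B`, `g : B → C` of abelian groups, comparing indices along `A → B → C`
gives `[B : f A] · [C : g B] = [ker g : f (ker (g ∘ f))] · [C : g f A]`. Applied to `(φ, φ')` and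
to `(ε, ε)`, with `ε ∘ ε = 2`, this writes `([G' : φ G] · [G : φ' G'])²` as
`[G'[φ'] : φ(G[ε])]² · [G[ε] : ε(G[2])] · [G : 2G]`. Finally `[G : 2G] = 2 ^ r · #G[2]`: the torsion
subgroup `T` is finite, so `[T : 2T] = #T[2] = #G[2]`, while `G/T` is free of rank `r`.
-/

open Module

namespace AddMonoidHom

variable {A B C : Type*} [AddCommGroup A] [AddCommGroup B] [AddCommGroup C]

theorem relIndex_mul_index_range_comp (f : A →+ B) (g : B →+ C) :
    ((g.comp f).ker.map f).relIndex g.ker * (g.comp f).range.index =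
      f.range.index * g.range.index := by
  rw [← comap_ker, AddSubgroup.map_comap_eq, AddSubgroup.inf_relIndex_right,
    ← AddSubgroup.relIndex_sup_right, range_comp, AddSubgroup.index_map, ← mul_assoc,
    sup_comm, AddSubgroup.relIndex_mul_index le_sup_left]

theorem map_range_nsmulAddMonoidHom_of_surjective (f : A →+ B) (hf : Function.Surjective f)
    (n : ℕ) :
    (nsmulAddMonoidHom (α := A) n).range.map f = (nsmulAddMonoidHom (α := B) n).range := by
  have hcomm : f.comp (nsmulAddMonoidHom n) = (nsmulAddMonoidHom n).comp f := by ext; simp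
  rw [map_range, hcomm, range_comp, range_eq_top.mpr hf, ← range_eq_map]

end AddMonoidHom

namespace AddSubgroup

variable {M : Type*} [AddCommGroup M]

theorem relIndex_map_nsmul_of_ker_le (S : AddSubgroup M) [Finite S] {n : ℕ}
    (hS : (nsmulAddMonoidHom (α := M) n).ker ≤ S) :
    (S.map (nsmulAddMonoidHom n)).relIndex S = Nat.card (nsmulAddMonoidHom (α := M) n).ker := by
  have hker : (nsmulAddMonoidHom (α := S) n).ker =
      (nsmulAddMonoidHom (α := M) n).ker.addSubgroupOf S := by
    ext x
    simp [mem_addSubgroupOf, ← ZeroMemClass.coe_eq_zero]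
  rw [relIndex, addSubgroupOf_map_nsmulAddMonoidHom_eq_range, index_range, hker]
  exact Nat.card_congr (addSubgroupOfEquivOfLe hS).toEquiv

end AddSubgroup

namespace AddCommGroup

variable {G : Type*} [AddCommGroup G]

theorem finite_torsion_of_fg [AddGroup.FG G] : Finite (torsion G) := by
  have : Module.Finite ℤ (torsion G) :=
    .of_injective (torsion G).subtype.toIntLinearMap Subtype.val_injective
  have : AddGroup.FG (torsion G) := Module.Finite.iff_addGroup_fg.mp this
  exact finite_of_fg_isAddTorsion _ AddCommMonoid.addTorsion.isAddTorsion

theorem ker_nsmulAddMonoidHom_le_torsion {n : ℕ} (hn : n ≠ 0) :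
    (nsmulAddMonoidHom (α := G) n).ker ≤ torsion G := fun _ hx =>
  isOfFinAddOrder_iff_nsmul_eq_zero.mpr ⟨n, Nat.pos_of_ne_zero hn, hx⟩

theorem range_nsmulAddMonoidHom_inf_torsion {n : ℕ} (hn : n ≠ 0) :
    (nsmulAddMonoidHom (α := G) n).range ⊓ torsion G = (torsion G).map (nsmulAddMonoidHom n) := by
  ext x
  simp only [AddSubgroup.mem_inf, AddMonoidHom.mem_range, AddSubgroup.mem_map, mem_torsion,
    nsmulAddMonoidHom_apply]
  constructor
  · rintro ⟨⟨y, rfl⟩, hy⟩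
    exact ⟨y, (isOfFinAddOrder_nsmul.mp hy).resolve_right hn, rfl⟩
  · rintro ⟨y, hy, rfl⟩
    exact ⟨⟨y, rfl⟩, hy.nsmul⟩

theorem index_range_nsmulAddMonoidHom_of_fg [AddGroup.FG G] {n : ℕ} (hn : n ≠ 0) :
    (nsmulAddMonoidHom (α := G) n).range.index =
      n ^ finrank ℤ (G ⧸ torsion G) * Nat.card (nsmulAddMonoidHom (α := G) n).ker := by
  have := finite_torsion_of_fg (G := G)
  set N := (nsmulAddMonoidHom (α := G) n).range
  have hfree : (N ⊔ torsion G).index = n ^ finrank ℤ (G ⧸ torsion G) := by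
    have hπ := QuotientAddGroup.mk'_surjective (torsion G)
    have h := AddSubgroup.index_map N (QuotientAddGroup.mk' (torsion G))
    rwa [AddMonoidHom.map_range_nsmulAddMonoidHom_of_surjective _ hπ,
      AddSubgroup.index_range_nsmul, QuotientAddGroup.ker_mk', AddMonoidHom.range_eq_top.mpr hπ,
      AddSubgroup.index_top, mul_one, eq_comm] at h
  have htors : N.relIndex (N ⊔ torsion G) = Nat.card (nsmulAddMonoidHom (α := G) n).ker := by
    rw [sup_comm, AddSubgroup.relIndex_sup_right, ← AddSubgroup.inf_relIndex_right,
      range_nsmulAddMonoidHom_inf_torsion hn,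
      AddSubgroup.relIndex_map_nsmul_of_ker_le _ (ker_nsmulAddMonoidHom_le_torsion hn)]
  rw [← AddSubgroup.relIndex_mul_index (le_sup_left : N ≤ N ⊔ torsion G), htors, hfree, mul_comm]

end AddCommGroup

theorem mordell_weil_rank_eq_general {G G' : Type*} [AddCommGroup G] [AddCommGroup G']
    (φ : G →+ G') (φ' : G' →+ G)
    (hε : (φ'.comp φ).comp (φ'.comp φ) = 2 • AddMonoidHom.id G)
    (hFG : AddGroup.FG G) (r : ℕ)
    (hr : Module.finrank ℤ (G ⧸ AddCommGroup.torsion G) = r)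
    (hcard :
      Nat.card (AddMonoidHom.ker (2 • AddMonoidHom.id G)) *
        Nat.card (φ'.ker ⧸
          ((AddSubgroup.map φ (AddMonoidHom.ker (φ'.comp φ))).addSubgroupOf φ'.ker)) ^ 2 *
        Nat.card ((AddMonoidHom.ker (φ'.comp φ)) ⧸
          ((AddSubgroup.map (φ'.comp φ) (AddMonoidHom.ker (2 • AddMonoidHom.id G))).addSubgroupOf
            (AddMonoidHom.ker (φ'.comp φ)))) = 2 ^ 4) :
    Finite (G' ⧸ φ.range) ∧ Finite (G ⧸ φ'.range) ∧
      2 ^ (4 + r) = Nat.card (G' ⧸ φ.range) ^ 2 * Nat.card (G ⧸ φ'.range) ^ 2 := by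
  have : AddGroup.FG G := hFG
  change Nat.card _ * ((φ'.comp φ).ker.map φ).relIndex φ'.ker ^ 2 *
    ((2 • AddMonoidHom.id G).ker.map (φ'.comp φ)).relIndex (φ'.comp φ).ker = 2 ^ 4 at hcard
  have hindex_two :
      (2 • AddMonoidHom.id G).range.index = 2 ^ r * Nat.card (2 • AddMonoidHom.id G).ker :=
    hr ▸ AddCommGroup.index_range_nsmulAddMonoidHom_of_fg two_ne_zero
  have hφ := φ.relIndex_mul_index_range_comp φ'
  have hε' := (φ'.comp φ).relIndex_mul_index_range_comp (φ'.comp φ)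
  rw [hε] at hε'
  have hprod : (φ.range.index * φ'.range.index) ^ 2 = 2 ^ (4 + r) := by
    rw [← hφ, mul_pow, sq (φ'.comp φ).range.index, ← hε', hindex_two, pow_add, ← hcard]
    ring
  have hne : φ.range.index * φ'.range.index ≠ 0 := fun h => by simpa [h] using hprod.symm
  refine ⟨Nat.finite_of_card_ne_zero (left_ne_zero_of_mul hne),
    Nat.finite_of_card_ne_zero (right_ne_zero_of_mul hne), ?_⟩
  rw [← mul_pow]
  exact hprod.symm

theorem mordell_weil_rank_eq {G G' : Type*} [AddCommGroup G] [AddCommGroup G']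
    (φ : G →+ G') (φ' : G' →+ G)
    (hε : (φ'.comp φ).comp (φ'.comp φ) = 2 • AddMonoidHom.id G)
    (hFG : AddGroup.FG G) (r : ℕ)
    (hr : Module.finrank ℤ (G ⧸ AddCommGroup.torsion G) = r)
    (hker : Finite φ'.ker)
    (hcard :
      Nat.card (AddMonoidHom.ker (2 • AddMonoidHom.id G)) *
        Nat.card (φ'.ker ⧸
          ((AddSubgroup.map φ (AddMonoidHom.ker (φ'.comp φ))).addSubgroupOf φ'.ker)) ^ 2 *
        Nat.card ((AddMonoidHom.ker (φ'.comp φ)) ⧸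
          ((AddSubgroup.map (φ'.comp φ) (AddMonoidHom.ker (2 • AddMonoidHom.id G))).addSubgroupOf
            (AddMonoidHom.ker (φ'.comp φ)))) = 2 ^ 4) :
    Finite (G' ⧸ φ.range) ∧ Finite (G ⧸ φ'.range) ∧
      2 ^ (4 + r) = Nat.card (G' ⧸ φ.range) ^ 2 * Nat.card (G ⧸ φ'.range) ^ 2 :=
  mordell_weil_rank_eq_general φ φ' hε hFG r hr hcard
end

section
/- Suppose that G is a finitely generated abelian group. Let T ⊆ G be a subset whose image in G/φ'(G') generates G/φ'(G'), and let T' ⊆ G' be a subset whose image in G'/φ(G) generates G'/φ(G). Then the subgroup of G generated by the set T ∪ ε(T) ∪ φ'(T') ∪ (ε ∘ φ')(T') has finite odd index in G. -/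
private lemma aux_finite_of_two_smul_surj (Q : Type*) [AddCommGroup Q] [AddGroup.FG Q]
    (h : Function.Surjective (fun q : Q => 2 • q)) : Finite Q := by
  obtain ⟨n, ι, fι, p, hp, e, ⟨f⟩⟩ := AddCommGroup.equiv_free_prod_directSum_zmod Q
  have hn : n = 0 := by
    by_contra hn
    have i : Fin n := ⟨0, Nat.pos_of_ne_zero hn⟩
    obtain ⟨q, hq⟩ := h (f.symm (Finsupp.single i 1, 0))
    have h1 := congrArg (fun x => (f x).1 i) hq
    simp only [map_nsmul, AddEquiv.apply_symm_apply] at h1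
    have h2 : (2 : ℤ) * (f q).1 i = 1 := by
      simpa [Finsupp.smul_apply, nsmul_eq_mul] using h1
    omega
  subst hn
  have : ∀ i, NeZero (p i ^ e i) := fun i => ⟨pow_ne_zero _ (hp i).pos.ne'⟩
  have h3 : Finite (DirectSum ι fun j => ZMod (p j ^ e j)) :=
    Finite.of_equiv _ DFinsupp.equivFunOnFintype.symm
  have h4 : Finite (Fin 0 →₀ ℤ) := Finite.of_equiv _ (Finsupp.equivFunOnFinite : (Fin 0 →₀ ℤ) ≃ _).symm
  exact Finite.of_equiv _ f.symm.toEquiv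

theorem generators_of_odd_index_subgroup {G G' : Type*} [AddCommGroup G] [AddCommGroup G']
    (φ : G →+ G') (φ' : G' →+ G)
    (hε : (φ'.comp φ).comp (φ'.comp φ) = 2 • AddMonoidHom.id G)
    (hFG : AddGroup.FG G)
    (T : Set G) (T' : Set G')
    (hT : AddSubgroup.closure ((QuotientAddGroup.mk' φ'.range) '' T) = ⊤)
    (hT' : AddSubgroup.closure ((QuotientAddGroup.mk' φ.range) '' T') = ⊤) :
    (AddSubgroup.closure
        (T ∪ (fun g => φ' (φ g)) '' T ∪ φ' '' T' ∪ (fun g' => φ' (φ (φ' g'))) '' T')).index ≠ 0 ∧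
      Odd (AddSubgroup.closure
        (T ∪ (fun g => φ' (φ g)) '' T ∪ φ' '' T' ∪ (fun g' => φ' (φ (φ' g'))) '' T')).index := by
  classical
  set ε : G →+ G := φ'.comp φ with hεdef
  set H : AddSubgroup G := AddSubgroup.closure
      (T ∪ (fun g => φ' (φ g)) '' T ∪ φ' '' T' ∪ (fun g' => φ' (φ (φ' g'))) '' T') with hHdef
  -- Step 1: closure T ⊔ φ'.range = ⊤
  have h1 : AddSubgroup.closure T ⊔ φ'.range = ⊤ := by
    have h := congrArg (AddSubgroup.comap (QuotientAddGroup.mk' φ'.range)) hT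
    rw [← AddMonoidHom.map_closure, AddSubgroup.comap_map_eq, QuotientAddGroup.ker_mk',
      AddSubgroup.comap_top] at h
    exact h
  have h2 : AddSubgroup.closure T' ⊔ φ.range = ⊤ := by
    have h := congrArg (AddSubgroup.comap (QuotientAddGroup.mk' φ.range)) hT'
    rw [← AddMonoidHom.map_closure, AddSubgroup.comap_map_eq, QuotientAddGroup.ker_mk',
      AddSubgroup.comap_top] at h
    exact h
  -- Step 2: decompose φ'.range
  have h3 : AddSubgroup.map φ' ⊤ = AddSubgroup.closure (φ' '' T') ⊔ AddSubgroup.map ε ⊤ := by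
    rw [← h2, AddSubgroup.map_sup, AddMonoidHom.map_closure, AddMonoidHom.range_eq_map,
      AddSubgroup.map_map, ← hεdef]
  -- Step 3: top decomposition
  have h4 : (⊤ : AddSubgroup G) = AddSubgroup.closure T ⊔ AddSubgroup.closure (φ' '' T')
      ⊔ AddSubgroup.map ε ⊤ := by
    conv_lhs => rw [← h1, AddMonoidHom.range_eq_map, h3]
    rw [sup_assoc]
  -- Step 4: apply ε
  have h5 : AddSubgroup.map ε ⊤ = AddSubgroup.closure (ε '' T)
      ⊔ AddSubgroup.closure (ε '' (φ' '' T')) ⊔ AddSubgroup.map (ε.comp ε) ⊤ := by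
    conv_lhs => rw [h4]
    rw [AddSubgroup.map_sup, AddSubgroup.map_sup, AddMonoidHom.map_closure,
      AddMonoidHom.map_closure, AddSubgroup.map_map]
  have h6 : (⊤ : AddSubgroup G) ≤ H ⊔ AddSubgroup.map (ε.comp ε) ⊤ := by
    conv_lhs => rw [h4, h5]
    have hcl : ∀ S : Set G, S ⊆ (T ∪ (fun g => φ' (φ g)) '' T ∪ φ' '' T'
        ∪ (fun g' => φ' (φ (φ' g'))) '' T') → AddSubgroup.closure S ≤ H :=
      fun S hs => AddSubgroup.closure_mono hs
    have l1 : AddSubgroup.closure T ≤ H := hcl T (by intro x hx; left; left; left; exact hx)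
    have l2 : AddSubgroup.closure (φ' '' T') ≤ H :=
      hcl _ (by intro x hx; left; right; exact hx)
    have l3 : AddSubgroup.closure (ε '' T) ≤ H := by
      refine hcl _ ?_
      intro x hx
      left; left; right
      simpa [hεdef] using hx
    have l4 : AddSubgroup.closure (ε '' (φ' '' T')) ≤ H := by
      refine hcl _ ?_
      intro x hx
      right
      rw [Set.image_image] at hx
      simpa [hεdef] using hx
    refine sup_le (sup_le (l1.trans le_sup_left) (l2.trans le_sup_left)) ?_
    refine sup_le (sup_le (l3.trans le_sup_left) (l4.trans le_sup_left)) le_sup_right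
  -- Step 5: surjectivity of 2 • on the quotient
  have hsurj : Function.Surjective (fun q : G ⧸ H => 2 • q) := by
    intro q
    obtain ⟨g, rfl⟩ := QuotientAddGroup.mk'_surjective H q
    have hg : g ∈ H ⊔ AddSubgroup.map (ε.comp ε) ⊤ := h6 trivial
    rw [AddSubgroup.mem_sup] at hg
    obtain ⟨y, hy, z, hz, hyz⟩ := hg
    obtain ⟨x, -, hx⟩ := hz
    refine ⟨QuotientAddGroup.mk' H x, ?_⟩
    have hz2 : (2 : ℕ) • x = z := by
      rw [← hx, hε]; simp
    have hy0 : QuotientAddGroup.mk' H y = 0 := by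
      simpa [QuotientAddGroup.eq_zero_iff] using hy
    calc (2 : ℕ) • (QuotientAddGroup.mk' H x)
        = QuotientAddGroup.mk' H ((2 : ℕ) • x) := (map_nsmul _ _ _).symm
      _ = QuotientAddGroup.mk' H y + QuotientAddGroup.mk' H z := by rw [hz2, hy0, zero_add]
      _ = QuotientAddGroup.mk' H (y + z) := (map_add _ _ _).symm
      _ = QuotientAddGroup.mk' H g := by rw [hyz]
  -- Step 6: finiteness and oddness
  have hfin : Finite (G ⧸ H) := aux_finite_of_two_smul_surj _ hsurj
  have hinj : Function.Injective (fun q : G ⧸ H => 2 • q) :=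
    (Finite.injective_iff_surjective).mpr hsurj
  have hcard : H.index = Nat.card (G ⧸ H) := rfl
  constructor
  · rw [hcard]
    exact Nat.card_ne_zero.mpr ⟨⟨0⟩, hfin⟩
  · rw [hcard, Nat.not_even_iff_odd.symm]
    intro heven
    have : Fintype (G ⧸ H) := Fintype.ofFinite _
    have h2dvd : 2 ∣ Fintype.card (G ⧸ H) := by
      have := heven.two_dvd
      rwa [Nat.card_eq_fintype_card] at this
    obtain ⟨x, hx⟩ := exists_prime_addOrderOf_dvd_card 2 h2dvd
    have hx0 : x ≠ 0 := by
      intro h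
      rw [h] at hx
      simp at hx
    refine hx0 (hinj ?_)
    show (2 : ℕ) • x = (2 : ℕ) • (0 : G ⧸ H)
    rw [smul_zero, ← hx]
    exact addOrderOf_nsmul_eq_zero x
end

section
/- The image ψ(G[η]) is contained in G'[ψ'], the image η(G) is contained in ψ'(G'), and the sequence of group homomorphisms 0 → G'[ψ']/ψ(G[η]) → G'/ψ(G) → G/η(G) → G/ψ'(G') → 0 is exact, where the first map is induced by the inclusion G'[ψ'] ⊆ G', the second map is induced by ψ', and the third map is the natural projection. That is: the first map is injective; the image of the first map equals the kernel of the second; the image of the second map equals the kernel of the third; and the third map is surjective. -/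
section

variable {G G' : Type*} [AddCommGroup G] [AddCommGroup G'] (ψ : G →+ G') (ψ' : G' →+ G)

/-- The image `ψ(G[η])` is contained in `G'[ψ']`, where `η = ψ' ∘ ψ`. -/
theorem map_ker_le_ker : AddSubgroup.map ψ (AddMonoidHom.ker (ψ'.comp ψ)) ≤ ψ'.ker := by
  rintro x ⟨g, hg, rfl⟩
  exact hg

/-- The first map in the exact sequence: `G'[ψ']/ψ(G[η]) → G'/ψ(G)`,
induced by the inclusion `G'[ψ'] ⊆ G'`. -/
noncomputable def firstMap :
    (ψ'.ker ⧸ ((AddSubgroup.map ψ (AddMonoidHom.ker (ψ'.comp ψ))).addSubgroupOf ψ'.ker)) →+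
      G' ⧸ ψ.range :=
  QuotientAddGroup.lift _ ((QuotientAddGroup.mk' ψ.range).comp ψ'.ker.subtype)
    (by
      intro x hx
      rw [AddSubgroup.mem_addSubgroupOf] at hx
      obtain ⟨g, _, hgx⟩ := hx
      show QuotientAddGroup.mk' ψ.range (ψ'.ker.subtype x) = 0
      rw [QuotientAddGroup.mk'_apply, QuotientAddGroup.eq_zero_iff]
      exact ⟨g, hgx⟩)

/-- The second map in the exact sequence: `G'/ψ(G) → G/η(G)`, induced by `ψ'`. -/
noncomputable def secondMap : (G' ⧸ ψ.range) →+ G ⧸ (ψ'.comp ψ).range :=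
  QuotientAddGroup.map ψ.range (ψ'.comp ψ).range ψ'
    (by rintro x ⟨g, rfl⟩; exact ⟨g, rfl⟩)

/-- The third map in the exact sequence: `G/η(G) → G/ψ'(G')`, the natural projection. -/
noncomputable def thirdMap : (G ⧸ (ψ'.comp ψ).range) →+ G ⧸ ψ'.range :=
  QuotientAddGroup.map (ψ'.comp ψ).range ψ'.range (AddMonoidHom.id G)
    (by rintro x ⟨g, rfl⟩; exact ⟨ψ g, rfl⟩)

theorem exact_sequence :
    AddSubgroup.map ψ (AddMonoidHom.ker (ψ'.comp ψ)) ≤ ψ'.ker ∧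
      (ψ'.comp ψ).range ≤ ψ'.range ∧
      Function.Injective (firstMap ψ ψ') ∧
      (firstMap ψ ψ').range = (secondMap ψ ψ').ker ∧
      (secondMap ψ ψ').range = (thirdMap ψ ψ').ker ∧
      Function.Surjective (thirdMap ψ ψ') := by
  refine ⟨map_ker_le_ker ψ ψ', ?_, ?_, ?_, ?_, ?_⟩
  · rintro x ⟨g, rfl⟩; exact ⟨ψ g, rfl⟩
  · rw [injective_iff_map_eq_zero]
    intro a
    induction a using QuotientAddGroup.induction_on with
    | H y =>
      intro hy
      have : (y : G') ∈ ψ.range := by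
        rwa [firstMap, QuotientAddGroup.lift_mk', AddMonoidHom.comp_apply,
          QuotientAddGroup.mk'_apply, QuotientAddGroup.eq_zero_iff] at hy
      obtain ⟨g, hg⟩ := this
      rw [QuotientAddGroup.eq_zero_iff, AddSubgroup.mem_addSubgroupOf]
      exact ⟨g, by show ψ' (ψ g) = 0; rw [hg]; exact y.2, hg⟩
  · ext a
    induction a using QuotientAddGroup.induction_on with
    | H x =>
      constructor
      · rintro ⟨b, hb⟩
        induction b using QuotientAddGroup.induction_on with
        | H y =>
          rw [firstMap, QuotientAddGroup.lift_mk'] at hb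
          simp only [AddMonoidHom.comp_apply, QuotientAddGroup.mk'_apply] at hb
          rw [AddMonoidHom.mem_ker, ← hb]
          show secondMap ψ ψ' (QuotientAddGroup.mk (y : G')) = 0
          rw [secondMap, QuotientAddGroup.map_mk, QuotientAddGroup.eq_zero_iff]
          exact ⟨0, by simp [show ψ' (y : G') = 0 from y.2]⟩
      · intro hx
        rw [AddMonoidHom.mem_ker] at hx
        rw [secondMap] at hx
        rw [show ((QuotientAddGroup.map ψ.range (ψ'.comp ψ).range ψ' _) (QuotientAddGroup.mk x)) = QuotientAddGroup.mk (ψ' x) from QuotientAddGroup.map_mk _ _ _ _ _] at hx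
        rw [QuotientAddGroup.eq_zero_iff] at hx
        obtain ⟨g, hg⟩ := hx
        have hker : x - ψ g ∈ ψ'.ker := by
          simp only [AddMonoidHom.mem_ker, map_sub, sub_eq_zero]
          exact hg.symm
        refine ⟨QuotientAddGroup.mk ⟨x - ψ g, hker⟩, ?_⟩
        rw [firstMap, QuotientAddGroup.lift_mk']
        simp only [AddMonoidHom.comp_apply, QuotientAddGroup.mk'_apply]
        show QuotientAddGroup.mk (x - ψ g) = QuotientAddGroup.mk x
        rw [QuotientAddGroup.eq]
        exact ⟨g, by abel⟩
  · ext a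
    induction a using QuotientAddGroup.induction_on with
    | H x =>
      constructor
      · rintro ⟨b, hb⟩
        induction b using QuotientAddGroup.induction_on with
        | H y =>
          rw [secondMap, QuotientAddGroup.map_mk] at hb
          rw [AddMonoidHom.mem_ker, ← hb]
          rw [thirdMap, QuotientAddGroup.map_mk, QuotientAddGroup.eq_zero_iff]
          exact ⟨y, rfl⟩
      · intro hx
        rw [AddMonoidHom.mem_ker, thirdMap, QuotientAddGroup.map_mk,
          QuotientAddGroup.eq_zero_iff] at hx
        obtain ⟨y, hy⟩ := hx
        refine ⟨QuotientAddGroup.mk y, ?_⟩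
        rw [secondMap, QuotientAddGroup.map_mk]
        exact congrArg QuotientAddGroup.mk hy
  · intro a
    induction a using QuotientAddGroup.induction_on with
    | H x => exact ⟨QuotientAddGroup.mk x, rfl⟩
end
end

section
/- Suppose that the kernel G'[ψ'] is finite and that the quotient G/η(G) is finite. Then the quotients G'/ψ(G) and G/ψ'(G') are finite, and Nat.card (G'/ψ(G)) · Nat.card (G/ψ'(G')) = Nat.card (G'[ψ']/ψ(G[η])) · Nat.card (G/η(G)). -/
/-!
Write `A = ψ(G)` and `K = G'[ψ']`. Then `η(G) = ψ'(A)`, and the index of the image of `A`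
under `ψ'` is `[G' : A ⊔ K] · [G : ψ'(G')]`, while `[G' : A] = [A ⊔ K : A] · [G' : A ⊔ K]` and
`[A ⊔ K : A] = [K : A ⊓ K]` with `A ⊓ K = ψ(G[η])`. Comparing the two products gives the identity;
since its right-hand side is a nonzero natural number, both indices on the left are finite.
-/

namespace AddMonoidHom

variable {G G' G'' : Type*} [AddGroup G] [AddGroup G'] [AddGroup G''] (f : G →+ G')
  (g : G' →+ G'')

theorem map_ker_comp : (g.comp f).ker.map f = f.range ⊓ g.ker := by
  rw [← comap_ker, AddSubgroup.map_comap_eq]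

theorem index_range_mul_index_range [f.range.Normal] :
    f.range.index * g.range.index = f.range.relIndex g.ker * (g.comp f).range.index := by
  rw [range_comp, AddSubgroup.index_map, ← mul_assoc, ← AddSubgroup.relIndex_sup_left,
    AddSubgroup.relIndex_mul_index le_sup_left]

end AddMonoidHom

theorem card_quotients_of_isogeny {G G' : Type*} [AddCommGroup G] [AddCommGroup G']
    (ψ : G →+ G') (ψ' : G' →+ G)
    (hker : Finite ψ'.ker)
    (hfin : Finite (G ⧸ (ψ'.comp ψ).range)) :
    Finite (G' ⧸ ψ.range) ∧ Finite (G ⧸ ψ'.range) ∧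
      Nat.card (G' ⧸ ψ.range) * Nat.card (G ⧸ ψ'.range) =
        Nat.card (ψ'.ker ⧸
            ((AddSubgroup.map ψ (AddMonoidHom.ker (ψ'.comp ψ))).addSubgroupOf ψ'.ker)) *
          Nat.card (G ⧸ (ψ'.comp ψ).range) := by
  have hindex := ψ.index_range_mul_index_range ψ'
  have hcard : Nat.card (ψ'.ker ⧸
      ((AddSubgroup.map ψ (AddMonoidHom.ker (ψ'.comp ψ))).addSubgroupOf ψ'.ker)) =
      ψ.range.relIndex ψ'.ker := by
    rw [ψ.map_ker_comp ψ']
    exact AddSubgroup.inf_relIndex_right _ _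
  have hne : ψ.range.index * ψ'.range.index ≠ 0 := by
    rw [hindex]
    exact mul_ne_zero AddSubgroup.index_ne_zero_of_finite AddSubgroup.index_ne_zero_of_finite
  obtain ⟨hA, hB⟩ := mul_ne_zero_iff.mp hne
  exact ⟨AddSubgroup.index_ne_zero_iff_finite.mp hA, AddSubgroup.index_ne_zero_iff_finite.mp hB,
    hcard ▸ hindex⟩
end

section
/- Let G be a finitely generated abelian group and let ε : G → G be a group homomorphism such that ε ∘ ε equals multiplication by 2 on G. Then the quotient G/ε(G) is finite and (Nat.card (G/ε(G)))² = Nat.card (G/2G) · Nat.card (G[ε]/ε(G[2])). -/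
/-!
For any endomorphism `ε` of an abelian group `G`, one has `ε⁻¹(ε²G) = εG + ker ε` and
`ε(ker ε²) = εG ∩ ker ε`. Reading indices along the tower `ε²G ≤ εG ≤ εG + ker ε ≤ G` then gives
`[G : εG]² = [G : ε²G] · [ker ε : εG ∩ ker ε]`, with the usual convention that an infinite index
is `0`. When `ε² = 2` and `G` is finitely generated, `G/2G` is finite, hence so is `G/εG`.
-/

namespace MonoidHom

variable {G : Type*} [CommGroup G] (ε : G →* G)

@[to_additive]
theorem range_comp_self_le_range : (ε.comp ε).range ≤ ε.range :=
  ε.range_comp ε ▸ Subgroup.map_le_range ε _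

@[to_additive]
theorem comap_range_comp_self : (ε.comp ε).range.comap ε = ε.range ⊔ ε.ker := by
  ext x
  simp only [Subgroup.mem_comap, mem_range, comp_apply, Subgroup.mem_sup, mem_ker]
  constructor
  · rintro ⟨y, hy⟩
    exact ⟨ε y, ⟨y, rfl⟩, (ε y)⁻¹ * x, by rw [map_mul, map_inv, hy, inv_mul_cancel],
      mul_inv_cancel_left _ _⟩
  · rintro ⟨_, ⟨y, rfl⟩, k, hk, rfl⟩
    exact ⟨y, by rw [map_mul, hk, mul_one]⟩

@[to_additive]
theorem map_ker_comp_self : (ε.comp ε).ker.map ε = ε.range ⊓ ε.ker := by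
  ext x
  simp only [Subgroup.mem_map, mem_ker, comp_apply, Subgroup.mem_inf, mem_range]
  constructor
  · rintro ⟨y, hy, rfl⟩
    exact ⟨⟨y, rfl⟩, hy⟩
  · rintro ⟨⟨y, rfl⟩, hy⟩
    exact ⟨y, hy, rfl⟩

@[to_additive]
theorem index_range_sq :
    ε.range.index ^ 2 = (ε.comp ε).range.index * ε.range.relIndex ε.ker := by
  have hcomap : (ε.comp ε).range.relIndex ε.range = (ε.range ⊔ ε.ker).index := by
    rw [← Subgroup.index_comap, comap_range_comp_self]
  calc ε.range.index ^ 2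
      = ε.range.relIndex (ε.range ⊔ ε.ker) * (ε.range ⊔ ε.ker).index * ε.range.index := by
        rw [Subgroup.relIndex_mul_index le_sup_left, sq]
    _ = (ε.comp ε).range.relIndex ε.range * ε.range.index * ε.range.relIndex ε.ker := by
        rw [Subgroup.relIndex_sup_left, hcomap]; ring
    _ = (ε.comp ε).range.index * ε.range.relIndex ε.ker := by
        rw [Subgroup.relIndex_mul_index ε.range_comp_self_le_range]

end MonoidHom

theorem card_quotient_sqrt_two_mul {G : Type*} [AddCommGroup G]
    (hFG : AddGroup.FG G) (ε : G →+ G)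
    (hε : ε.comp ε = 2 • AddMonoidHom.id G) :
    Finite (G ⧸ ε.range) ∧
      Nat.card (G ⧸ ε.range) ^ 2 =
        Nat.card (G ⧸ (2 • AddMonoidHom.id G).range) *
          Nat.card (ε.ker ⧸
            ((AddSubgroup.map ε (AddMonoidHom.ker (2 • AddMonoidHom.id G))).addSubgroupOf
              ε.ker)) := by
  have htwo : 2 • AddMonoidHom.id G = nsmulAddMonoidHom 2 := by ext; simp
  have : (ε.comp ε).range.FiniteIndex := by
    rw [hε, htwo]; exact AddSubgroup.finiteIndex_range_nsmulAddMonoidHom_of_fg G two_ne_zero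
  have : ε.range.FiniteIndex := AddSubgroup.finiteIndex_of_le ε.range_comp_self_le_range
  refine ⟨AddSubgroup.finiteIndex_iff_finite_quotient.mp this, ?_⟩
  rw [← hε, ε.map_ker_comp_self]
  exact (ε.index_range_sq).trans (congrArg _ (AddSubgroup.inf_relIndex_right _ _).symm)
end

section
/- Let O be a discrete valuation ring with maximal ideal m, residue field k = O/m, and fraction field K, let v be the normalized (surjective, ℤ-valued) discrete valuation on K, and let D ∈ K be a uniformizer, i.e. v(D) = 1. Let F₂, F₄ ∈ O[X] be polynomials of degrees at most 2 and at most 4 respectively. Suppose there exist U, V ∈ K, a unit w ∈ O^×, and polynomials P₁, P₂ ∈ K[X] of degree at most 2 such that F₄(X) − D·F₂(X)·(U·X + V)² = w·(P₁(X)² − D·P₂(X)²) in K[X]. Then the reduction modulo m of F₂ or the reduction modulo m of F₄ is a constant times a square in k[X]; that is, there exist c ∈ k and G ∈ k[X] such that the image of F₂ in k[X] equals c·G², or there exist c ∈ k and G ∈ k[X] such that the image of F₄ in k[X] equals c·G². -/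
/-!
Clearing denominators by a common power `d ^ N` of the uniformizer turns the identity into
`d ^ (2N) F₄ - d F₂ l² = w (r₁² - d r₂²)` in `O[X]`, with `deg l ≤ 1`. Since the two terms of
`a² - d b²` have valuations of different parity, a power of `d` dividing it can be divided out:
`d ^ (2n)` keeps the shape, `d ^ (2n+1)` turns it into `d a² - b²`. If `d ^ N ∣ l`, dividing by
`d ^ (2N)` and reducing gives `F̄₄ = w̄ ā²`. Otherwise `l = d ^ c l'` with `c < N` and `d ∤ l'`;
dividing by `d ^ (2c+1)` and reducing gives `F̄₂ l̄'² = w̄ b̄²`, and `l̄' ≠ 0` has degree at most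
one, so it is a unit or a prime of `k[X]` and divides `b̄`.
-/

open Polynomial IsLocalRing

section Descent

variable {R : Type*} [CommRing R] [IsDomain R] {p u A a b : R}

theorem Prime.exists_eq_mul_mul_sq_sub_sq (hp : Prime p) (hu : ¬p ∣ u)
    (h : p * A = u * (a ^ 2 - p * b ^ 2)) : ∃ a', A = u * (p * a' ^ 2 - b ^ 2) := by
  have hpa : p ∣ a ^ 2 := by
    have : p ∣ a ^ 2 - p * b ^ 2 := (hp.dvd_or_dvd ⟨A, h.symm⟩).resolve_left hu
    exact (dvd_sub_left (dvd_mul_right p _)).mp this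
  obtain ⟨a', rfl⟩ := hp.dvd_of_dvd_pow hpa
  refine ⟨a', mul_left_cancel₀ hp.ne_zero ?_⟩
  linear_combination h

theorem Prime.exists_eq_mul_sq_sub_mul_sq (hp : Prime p) (hu : ¬p ∣ u)
    (h : p * A = u * (p * a ^ 2 - b ^ 2)) : ∃ b', A = u * (a ^ 2 - p * b' ^ 2) := by
  have hpb : p ∣ b ^ 2 := by
    have : p ∣ p * a ^ 2 - b ^ 2 := (hp.dvd_or_dvd ⟨A, h.symm⟩).resolve_left hu
    exact (dvd_sub_right (dvd_mul_right p _)).mp this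
  obtain ⟨b', rfl⟩ := hp.dvd_of_dvd_pow hpb
  refine ⟨b', mul_left_cancel₀ hp.ne_zero ?_⟩
  linear_combination h

theorem Prime.exists_eq_mul_sq_sub_mul_sq_of_pow_two_mul (hp : Prime p) (hu : ¬p ∣ u) (n : ℕ)
    (h : p ^ (2 * n) * A = u * (a ^ 2 - p * b ^ 2)) :
    ∃ a' b', A = u * (a' ^ 2 - p * b' ^ 2) := by
  induction n generalizing A a b with
  | zero => exact ⟨a, b, by simpa using h⟩
  | succ n ih =>
    obtain ⟨a', ha'⟩ := hp.exists_eq_mul_mul_sq_sub_sq hu (A := p ^ (2 * n + 1) * A)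
      (by rw [← h]; ring)
    obtain ⟨b', hb'⟩ := hp.exists_eq_mul_sq_sub_mul_sq hu (A := p ^ (2 * n) * A)
      (by rw [← ha']; ring)
    exact ih hb'

theorem Prime.exists_eq_mul_mul_sq_sub_sq_of_pow_two_mul_add_one (hp : Prime p) (hu : ¬p ∣ u)
    (n : ℕ) (h : p ^ (2 * n + 1) * A = u * (a ^ 2 - p * b ^ 2)) :
    ∃ a' b', A = u * (p * a' ^ 2 - b' ^ 2) := by
  obtain ⟨a', b', h'⟩ := hp.exists_eq_mul_sq_sub_mul_sq_of_pow_two_mul hu n (A := p * A)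
    (by rw [← h]; ring)
  obtain ⟨a'', h''⟩ := hp.exists_eq_mul_mul_sq_sub_sq hu h'
  exact ⟨a'', b', h''⟩

end Descent

def IsConstMulSq {k : Type*} [Semiring k] (f : k[X]) : Prop :=
  ∃ c Q, f = C c * Q ^ 2

theorem exists_eq_mul_sq_of_mul_sq_eq_mul_sq {R : Type*} [CommRing R] [IsDomain R]
    {A L B u : R} (hL : IsUnit L ∨ Prime L) (hu : IsUnit u) (h : A * L ^ 2 = u * B ^ 2) :
    ∃ Q, A = u * Q ^ 2 := by
  have hLB : L ∣ B := by
    rcases hL with hL | hL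
    · exact hL.dvd
    · exact hL.dvd_of_dvd_pow (hu.dvd_mul_left.mp
      (show L ∣ u * B ^ 2 from ⟨A * L, by linear_combination -h⟩))
  obtain ⟨Q, rfl⟩ := hLB
  have hL0 : L ≠ 0 := hL.elim IsUnit.ne_zero Prime.ne_zero
  exact ⟨Q, mul_right_cancel₀ (pow_ne_zero 2 hL0) (by linear_combination h)⟩

theorem Polynomial.isUnit_or_prime_of_degree_le_one {k : Type*} [Field k] {L : k[X]}
    (hL : L ≠ 0) (h : L.degree ≤ 1) : IsUnit L ∨ Prime L := by
  rw [degree_eq_natDegree hL, Nat.cast_le_one] at h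
  interval_cases hn : L.natDegree
  · exact .inl (isUnit_iff_degree_eq_zero.mpr (by rw [degree_eq_natDegree hL, hn]; rfl))
  · exact .inr (prime_of_degree_eq_one (by rw [degree_eq_natDegree hL, hn]; rfl))

theorem isConstMulSq_of_mul_sq_eq_C_mul_sq {k : Type*} [Field k] {A L B : k[X]} {u : k}
    (hu : u ≠ 0) (hL : L ≠ 0) (hL1 : L.degree ≤ 1) (h : A * L ^ 2 = C u * B ^ 2) :
    IsConstMulSq A :=
  ⟨u, exists_eq_mul_sq_of_mul_sq_eq_mul_sq (isUnit_or_prime_of_degree_le_one hL hL1)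
    (isUnit_C.mpr (isUnit_iff_ne_zero.mpr hu)) h⟩

theorem Ideal.Quotient.mk_maximalIdeal_eq_zero {R : Type*} [CommRing R] [IsLocalRing R] {x : R}
    (hx : ¬IsUnit x) : Ideal.Quotient.mk (maximalIdeal R) x = 0 :=
  Ideal.Quotient.eq_zero_iff_mem.mpr ((mem_maximalIdeal x).mpr hx)

section DVR

variable {O : Type*} [CommRing O] [IsDomain O] [IsDiscreteValuationRing O] {d : O}

theorem Polynomial.map_residue_eq_zero_iff (hd : Irreducible d) {G : O[X]} :
    G.map (Ideal.Quotient.mk (maximalIdeal O)) = 0 ↔ C d ∣ G := by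
  simp only [Polynomial.ext_iff, coeff_map, coeff_zero, Ideal.Quotient.eq_zero_iff_mem,
    hd.maximalIdeal_eq, Ideal.mem_span_singleton, C_dvd_iff_dvd_coeff]

theorem exists_map_eq_C_pow_mul (K : Type*) [Field K] [Algebra O K] [IsFractionRing O K]
    (hd : Irreducible d) (P : K[X]) :
    ∃ M, ∀ N, M ≤ N → ∃ r : O[X], r.map (algebraMap O K) = C (algebraMap O K d ^ N) * P := by
  obtain ⟨b, hb, hbP⟩ := IsLocalization.integerNormalization_spec (nonZeroDivisors O) P
  obtain ⟨M, v, rfl⟩ :=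
    IsDiscreteValuationRing.eq_unit_mul_pow_irreducible (nonZeroDivisors.ne_zero hb) hd
  refine ⟨M, fun N hN => ?_⟩
  obtain ⟨j, rfl⟩ := Nat.exists_eq_add_of_le hN
  refine ⟨C (↑v⁻¹ * d ^ j) * IsLocalization.integerNormalization (nonZeroDivisors O) P, ?_⟩
  rw [Polynomial.map_mul, hbP, map_C, Algebra.smul_def, Polynomial.algebraMap_apply, ← mul_assoc,
    ← C_mul, ← map_mul, ← map_pow]
  congr 3
  linear_combination d ^ j * d ^ M * v.inv_mul

variable {N : ℕ} {F2 F4 l r1 r2 : O[X]} {w : Oˣ}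

theorem isConstMulSq_map_residue_of_pow_dvd (hd : Irreducible d)
    (h : C d ^ (2 * N) * F4 - C d * F2 * l ^ 2 = C (w : O) * (r1 ^ 2 - C d * r2 ^ 2))
    (hl : C d ^ N ∣ l) : IsConstMulSq (F4.map (Ideal.Quotient.mk (maximalIdeal O))) := by
  have hp : Prime (C d) := prime_C_iff.mpr hd.prime
  have hw : ¬C d ∣ C (w : O) := fun h' => hp.not_isUnit (isUnit_of_dvd_unit h' (w.isUnit.map C))
  obtain ⟨l1, rfl⟩ := hl
  obtain ⟨a, b, hab⟩ := hp.exists_eq_mul_sq_sub_mul_sq_of_pow_two_mul hw N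
    (A := F4 - C d * F2 * l1 ^ 2) (by rw [← h]; ring)
  have hF4 : F4 = C (w : O) * a ^ 2 + C d * (F2 * l1 ^ 2 - C (w : O) * b ^ 2) := by
    linear_combination hab
  refine ⟨Ideal.Quotient.mk _ w, a.map (Ideal.Quotient.mk _), ?_⟩
  rw [hF4]
  simp only [Polynomial.map_add, Polynomial.map_mul, Polynomial.map_pow, map_C,
    Ideal.Quotient.mk_maximalIdeal_eq_zero hd.not_isUnit, C_0, zero_mul, add_zero]

theorem isConstMulSq_map_residue_of_not_pow_dvd (hd : Irreducible d)
    (h : C d ^ (2 * N) * F4 - C d * F2 * l ^ 2 = C (w : O) * (r1 ^ 2 - C d * r2 ^ 2))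
    (hl : ¬C d ^ N ∣ l) (hl1 : l.degree ≤ 1) :
    IsConstMulSq (F2.map (Ideal.Quotient.mk (maximalIdeal O))) := by
  have hp : Prime (C d) := prime_C_iff.mpr hd.prime
  have hw : ¬C d ∣ C (w : O) := fun h' => hp.not_isUnit (isUnit_of_dvd_unit h' (w.isUnit.map C))
  have hl0 : l ≠ 0 := by rintro rfl; exact hl (dvd_zero _)
  obtain ⟨c, l', hl', rfl⟩ := WfDvdMonoid.max_power_factor hl0 hp.irreducible
  have hcN : c < N := by
    by_contra! hNc
    exact hl (dvd_mul_of_dvd_left (pow_dvd_pow _ hNc) _)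
  obtain ⟨j, rfl⟩ := Nat.exists_eq_add_of_lt hcN
  obtain ⟨a, b, hab⟩ := hp.exists_eq_mul_mul_sq_sub_sq_of_pow_two_mul_add_one hw c
    (A := C d ^ (2 * j + 1) * F4 - F2 * l' ^ 2) (by rw [← h]; ring)
  have hF2 : F2 * l' ^ 2 = C (w : O) * b ^ 2 + C d * (C d ^ (2 * j) * F4 - C (w : O) * a ^ 2) := by
    linear_combination -hab
  have hF2red := congrArg (map (Ideal.Quotient.mk (maximalIdeal O))) hF2
  simp only [Polynomial.map_add, Polynomial.map_mul, Polynomial.map_pow, map_C,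
    Ideal.Quotient.mk_maximalIdeal_eq_zero hd.not_isUnit, C_0, zero_mul, add_zero] at hF2red
  -- instance search does not see through `O ⧸ maximalIdeal O` to `ResidueField O`
  let : Field (O ⧸ maximalIdeal O) := Ideal.Quotient.field _
  refine isConstMulSq_of_mul_sq_eq_C_mul_sq (w.isUnit.map _).ne_zero ?_ ?_ hF2red
  · exact mt (map_residue_eq_zero_iff hd).mp hl'
  · exact degree_map_le.trans ((degree_le_of_dvd (dvd_mul_left l' _) hl0).trans hl1)

end DVR

theorem reduction_is_const_mul_sq_general {O K : Type*} [CommRing O] [IsDomain O]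
    [IsDiscreteValuationRing O] [Field K] [Algebra O K] [IsFractionRing O K]
    (D : K) (hD : ∃ d : O, Irreducible d ∧ algebraMap O K d = D)
    (F2 F4 : Polynomial O)
    (U V : K) (w : Oˣ) (P1 P2 : Polynomial K)
    (heq : F4.map (algebraMap O K) -
        Polynomial.C D * F2.map (algebraMap O K) *
          (Polynomial.C U * Polynomial.X + Polynomial.C V) ^ 2 =
      Polynomial.C (algebraMap O K (w : O)) * (P1 ^ 2 - Polynomial.C D * P2 ^ 2)) :
    (∃ (c : O ⧸ IsLocalRing.maximalIdeal O)
        (Q : Polynomial (O ⧸ IsLocalRing.maximalIdeal O)),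
      F2.map (Ideal.Quotient.mk (IsLocalRing.maximalIdeal O)) = Polynomial.C c * Q ^ 2) ∨
    (∃ (c : O ⧸ IsLocalRing.maximalIdeal O)
        (Q : Polynomial (O ⧸ IsLocalRing.maximalIdeal O)),
      F4.map (Ideal.Quotient.mk (IsLocalRing.maximalIdeal O)) = Polynomial.C c * Q ^ 2) := by
  obtain ⟨d, hd, rfl⟩ := hD
  obtain ⟨M₁, h₁⟩ := exists_map_eq_C_pow_mul K hd P1
  obtain ⟨M₂, h₂⟩ := exists_map_eq_C_pow_mul K hd P2
  obtain ⟨M₃, h₃⟩ := exists_map_eq_C_pow_mul K hd (C U * X + C V)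
  obtain ⟨r₁, hr₁⟩ := h₁ (M₁ + M₂ + M₃) (by omega)
  obtain ⟨r₂, hr₂⟩ := h₂ (M₁ + M₂ + M₃) (by omega)
  obtain ⟨l, hl⟩ := h₃ (M₁ + M₂ + M₃) (by omega)
  have inj := IsFractionRing.injective O K
  have hE : C d ^ (2 * (M₁ + M₂ + M₃)) * F4 - C d * F2 * l ^ 2 =
      C (w : O) * (r₁ ^ 2 - C d * r₂ ^ 2) := by
    apply map_injective _ inj
    simp only [Polynomial.map_sub, Polynomial.map_mul, Polynomial.map_pow, map_C, hr₁, hr₂, hl,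
      C_pow]
    linear_combination (C (algebraMap O K d) ^ (M₁ + M₂ + M₃)) ^ 2 * heq
  have hl1 : l.degree ≤ 1 := by
    rw [← degree_map_eq_of_injective inj, hl]
    compute_degree
  by_cases hdl : C d ^ (M₁ + M₂ + M₃) ∣ l
  · exact .inr (isConstMulSq_map_residue_of_pow_dvd hd hE hdl)
  · exact .inl (isConstMulSq_map_residue_of_not_pow_dvd hd hE hdl hl1)

theorem reduction_is_const_mul_sq {O K : Type*} [CommRing O] [IsDomain O]
    [IsDiscreteValuationRing O] [Field K] [Algebra O K] [IsFractionRing O K]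
    (D : K) (hD : ∃ d : O, Irreducible d ∧ algebraMap O K d = D)
    (F2 F4 : Polynomial O) (hF2 : F2.degree ≤ 2) (hF4 : F4.degree ≤ 4)
    (U V : K) (w : Oˣ) (P1 P2 : Polynomial K) (hP1 : P1.degree ≤ 2) (hP2 : P2.degree ≤ 2)
    (heq : F4.map (algebraMap O K) -
        Polynomial.C D * F2.map (algebraMap O K) *
          (Polynomial.C U * Polynomial.X + Polynomial.C V) ^ 2 =
      Polynomial.C (algebraMap O K (w : O)) * (P1 ^ 2 - Polynomial.C D * P2 ^ 2)) :
    (∃ (c : O ⧸ IsLocalRing.maximalIdeal O)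
        (Q : Polynomial (O ⧸ IsLocalRing.maximalIdeal O)),
      F2.map (Ideal.Quotient.mk (IsLocalRing.maximalIdeal O)) = Polynomial.C c * Q ^ 2) ∨
    (∃ (c : O ⧸ IsLocalRing.maximalIdeal O)
        (Q : Polynomial (O ⧸ IsLocalRing.maximalIdeal O)),
      F4.map (Ideal.Quotient.mk (IsLocalRing.maximalIdeal O)) = Polynomial.C c * Q ^ 2) :=
  reduction_is_const_mul_sq_general D hD F2 F4 U V w P1 P2 heq
end

section
/- Let D be a negative real number, let F₂ ∈ ℝ[X] be a polynomial of degree exactly 2 with leading coefficient a₂ and constant coefficient c₂, and let F₄ ∈ ℝ[X] be a polynomial of degree exactly 4 with leading coefficient a₄ and constant coefficient c₄. Suppose a₂·a₄ > 0, a₂·c₂ < 0, and a₄·c₄ < 0. Then there do not exist real numbers U, V, N and polynomials P₁, P₂ ∈ ℝ[X] such that F₄(X) − D·F₂(X)·(U·X + V)² = N·(P₁(X)² − D·P₂(X)²) in ℝ[X]. -/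
open Polynomial Filter

theorem no_real_representation (D : ℝ) (hD : D < 0) (F2 F4 : Polynomial ℝ)
    (hdeg2 : F2.degree = 2) (hdeg4 : F4.degree = 4)
    (hlead : F2.coeff 2 * F4.coeff 4 > 0)
    (hF2 : F2.coeff 2 * F2.coeff 0 < 0)
    (hF4 : F4.coeff 4 * F4.coeff 0 < 0) :
    ¬ ∃ (U V N : ℝ) (P1 P2 : Polynomial ℝ),
        F4 - Polynomial.C D * F2 * (Polynomial.C U * Polynomial.X + Polynomial.C V) ^ 2 =
          Polynomial.C N * (P1 ^ 2 - Polynomial.C D * P2 ^ 2) := by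
  rintro ⟨U, V, N, P1, P2, hrep⟩
  set a2 := F2.coeff 2 with ha2
  set a4 := F4.coeff 4 with ha4
  set c2 := F2.coeff 0 with hc2
  set c4 := F4.coeff 0 with hc4
  set G : Polynomial ℝ := F4 - C D * F2 * (C U * X + C V) ^ 2 with hG
  have h3 : F2.coeff 3 = 0 := coeff_eq_zero_of_degree_lt (by rw [hdeg2]; norm_num)
  have h4f : F2.coeff 4 = 0 := coeff_eq_zero_of_degree_lt (by rw [hdeg2]; norm_num)
  -- expand the subtracted part
  have expand : C D * F2 * (C U * X + C V) ^ 2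
      = C (D * U^2) * (F2 * X^2) + C (2 * D * U * V) * (F2 * X) + C (D * V^2) * F2 := by
    simp only [map_mul, map_pow, map_ofNat]
    ring
  have hG4 : G.coeff 4 = a4 - D * a2 * U^2 := by
    rw [hG, coeff_sub, expand]
    simp only [coeff_add, coeff_C_mul]
    rw [show (4:ℕ) = 2 + 2 from rfl, coeff_mul_X_pow]
    rw [show (2+2:ℕ) = 3 + 1 from rfl, coeff_mul_X]
    rw [h3]
    rw [show (3+1:ℕ) = 4 from rfl, h4f]
    ring
  have hG0 : G.eval 0 = c4 - D * c2 * V^2 := by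
    rw [hG]
    simp [hc4, hc2, ← coeff_zero_eq_eval_zero]
  have ha4ne : a4 ≠ 0 := by
    intro h; rw [h] at hF4; simp at hF4
  -- degree of G
  have hq : (C U * X + C V).degree ≤ 1 := degree_linear_le
  have hGdle : G.degree <= 4 := by
    refine le_trans (degree_sub_le _ _) ?_
    rw [max_le_iff]
    refine ⟨le_of_eq hdeg4, ?_⟩
    have h1 : (C D * F2).degree ≤ 0 + 2 := degree_mul_le_of_le degree_C_le (le_of_eq hdeg2)
    have h2 : ((C U * X + C V) ^ 2).degree ≤ 2 * 1 := degree_pow_le_of_le 2 hq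
    refine le_trans (degree_mul_le_of_le h1 h2) ?_
    decide
  have hLa4 : 0 < a4 * G.coeff 4 := by
    rw [hG4]
    nlinarith [mul_nonneg (mul_nonneg (neg_nonneg.mpr hD.le) hlead.le) (sq_nonneg U),
      mul_self_pos.mpr ha4ne]
  have hLne : G.coeff 4 ≠ 0 := by
    intro h; rw [h, mul_zero] at hLa4; exact lt_irrefl _ hLa4
  have hGdeg : G.degree = 4 := degree_eq_of_le_of_coeff_ne_zero hGdle hLne
  have hGlead : G.leadingCoeff = G.coeff 4 := by
    rw [leadingCoeff, natDegree_eq_of_degree_eq_some hGdeg]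
  -- sign positivity from representation
  have hsign : ∀ x : ℝ, 0 ≤ G.eval 0 * G.eval x := by
    intro x
    have h0 := congrArg (Polynomial.eval (0:ℝ)) hrep
    have hx := congrArg (Polynomial.eval x) hrep
    simp only [eval_mul, eval_sub, eval_pow, eval_C] at h0 hx
    rw [h0, hx]
    have b0 : 0 ≤ P1.eval 0 ^ 2 - D * P2.eval 0 ^ 2 := by nlinarith [sq_nonneg (P1.eval 0), sq_nonneg (P2.eval 0)]
    have bx : 0 ≤ P1.eval x ^ 2 - D * P2.eval x ^ 2 := by nlinarith [sq_nonneg (P1.eval x), sq_nonneg (P2.eval x)]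
    nlinarith [sq_nonneg N, mul_nonneg b0 bx]
  -- G(0) has sign opposite to a4
  have hca : c2 * a4 < 0 := by nlinarith [sq_nonneg a2]
  have hG0a4 : a4 * G.eval 0 < 0 := by
    rw [hG0]
    nlinarith [mul_nonneg (mul_nonneg (neg_nonneg.mpr hD.le) (neg_nonneg.mpr hca.le)) (sq_nonneg V)]
  -- find a point where a4 * G.eval x > 0
  set H : Polynomial ℝ := C a4 * G with hH
  have hHdeg : H.degree = 4 := by
    rw [hH, degree_C_mul ha4ne, hGdeg]
  have hHlead : 0 ≤ H.leadingCoeff := by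
    rw [hH, leadingCoeff_mul, leadingCoeff_C, hGlead]
    exact hLa4.le
  have htend := H.tendsto_atTop_of_leadingCoeff_nonneg (by rw [hHdeg]; norm_num) hHlead
  obtain ⟨x, hx⟩ := (htend.eventually_gt_atTop 0).exists
  have hx' : 0 < a4 * G.eval x := by
    simpa [hH] using hx
  have h := hsign x
  nlinarith [mul_pos (neg_pos.mpr hG0a4) hx', mul_nonneg (mul_self_nonneg a4) h]
end

section
/- Let O be a discrete valuation ring with fraction field K, let v be the normalized (surjective, ℤ-valued) discrete valuation on K, and let D ∈ K with v(D) = 1. If A, B ∈ K[X] are polynomials such that every coefficient of the polynomial A² − D·B² lies in O, then every coefficient of A lies in O and every coefficient of B lies in O. -/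
/-!
Write `v(P) = min_i v(P_i)` for the Gauss valuation of `P ∈ K[X]`; by Gauss's lemma it is
additive, so `v(A²) = 2 v(A)` and `v(D B²) = 1 + 2 v(B)`. These have different parities, hence
never cancel: `v(A² - D B²) = min (2 v(A)) (1 + 2 v(B))`. If this is `≥ 0`, then `v(A) ≥ 0`, and
`1 + 2 v(B) ≥ 0` forces `v(B) ≥ 0` since `v(B)` is an integer.

Formally we work with the absolute value `2 ^ (-v)` on `K` and its Gauss norm `max_i |P_i|`.
-/

namespace Polynomial

variable {K : Type*} [Field K] {v : AbsoluteValue K ℝ}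

theorem gaussNorm_le_one_iff {p : K[X]} : p.gaussNorm v 1 ≤ 1 ↔ ∀ i, v (p.coeff i) ≤ 1 := by
  obtain ⟨j, hj⟩ := p.exists_eq_gaussNorm v 1
  refine ⟨fun h i => ?_, fun h => ?_⟩
  · simpa using (p.le_gaussNorm v zero_le_one i).trans h
  · simpa [hj] using h j

open IsAbsoluteValue in
theorem gaussNorm_sq_sub_C_mul_sq (hna : IsNonarchimedean v) {D : K} (hD : ∀ z, v D ≠ v z ^ 2)
    (A B : K[X]) :
    (A ^ 2 - C D * B ^ 2).gaussNorm v 1 =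
      max (A.gaussNorm v 1 ^ 2) (v D * B.gaussNorm v 1 ^ 2) := by
  let := gaussNorm_isAbsoluteValue hna one_pos
  have hA : (A ^ 2).gaussNorm v 1 = A.gaussNorm v 1 ^ 2 := abv_pow _ A 2
  have hDB : (-(C D * B ^ 2)).gaussNorm v 1 = v D * B.gaussNorm v 1 ^ 2 := by
    rw [abv_neg (gaussNorm v 1), abv_mul (gaussNorm v 1), abv_pow (gaussNorm v 1), gaussNorm_C]
  rcases eq_or_ne B 0 with rfl | hB
  · simp [hA, A.gaussNorm_nonneg v zero_le_one]
  have hne : A.gaussNorm v 1 ^ 2 ≠ v D * B.gaussNorm v 1 ^ 2 := by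
    intro h
    obtain ⟨i, hi⟩ := A.exists_eq_gaussNorm v 1
    obtain ⟨j, hj⟩ := B.exists_eq_gaussNorm v 1
    have hb : v (B.coeff j) ≠ 0 := by
      have := (gaussNorm_eq_zero_iff v (p := B) (fun _ => (map_eq_zero v).1) one_pos).not.2 hB
      simpa [hj] using this
    apply hD (A.coeff i / B.coeff j)
    rw [map_div₀, div_pow, eq_div_iff (pow_ne_zero 2 hb)]
    simpa [hi, hj] using h.symm
  rw [sub_eq_add_neg, IsNonarchimedean.add_eq_max_of_ne' _
    (isNonarchimedean_gaussNorm v hna zero_le_one) (fun p => (abv_neg _ p).symm), hA, hDB]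
  rwa [hA, hDB]

theorem coeff_le_one_of_coeff_sq_sub_C_mul_sq_le_one (hna : IsNonarchimedean v) {D : K}
    (hD : ∀ z, v D ≠ v z ^ 2) (hD₁ : ∀ z, v D * v z ^ 2 ≤ 1 → v z ≤ 1) {A B : K[X]}
    (h : ∀ i, v ((A ^ 2 - C D * B ^ 2).coeff i) ≤ 1) :
    (∀ i, v (A.coeff i) ≤ 1) ∧ ∀ i, v (B.coeff i) ≤ 1 := by
  rw [← gaussNorm_le_one_iff, gaussNorm_sq_sub_C_mul_sq hna hD, max_le_iff] at h
  obtain ⟨j, hj⟩ := B.exists_eq_gaussNorm v 1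
  rw [one_pow, mul_one] at hj
  refine ⟨gaussNorm_le_one_iff.1 ((pow_le_one_iff_of_nonneg (A.gaussNorm_nonneg v zero_le_one)
    two_ne_zero).1 h.1), gaussNorm_le_one_iff.1 ?_⟩
  rw [hj] at h ⊢
  exact hD₁ _ h.2

end Polynomial

namespace WithZero

theorem exp_neg_one_ne_sq (g : ℤᵐ⁰) : exp (-1) ≠ g ^ 2 := by
  rcases eq_or_ne g 0 with rfl | hg
  · simp
  rw [← exp_log hg, ← exp_nsmul, Ne, exp_inj, nsmul_eq_mul]
  omega

theorem le_one_of_exp_neg_one_mul_sq_le_one {g : ℤᵐ⁰} (h : exp (-1) * g ^ 2 ≤ 1) :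
    g ≤ 1 := by
  rcases eq_or_ne g 0 with rfl | hg
  · exact zero_le
  rw [← exp_log hg, ← exp_nsmul, ← exp_add, ← exp_zero, exp_le_exp, nsmul_eq_mul] at h
  rw [← exp_log hg, ← exp_zero, exp_le_exp]
  omega

end WithZero

namespace IsDedekindDomain.HeightOneSpectrum

open WithZeroMulInt

variable {R K : Type*} [CommRing R] [IsDedekindDomain R] [Field K] [Algebra R K]
  [IsFractionRing R K] (v : HeightOneSpectrum R) {b : NNReal} (hb : 1 < b)

theorem adicAbv_le_adicAbv_iff {x y : K} :
    v.adicAbv hb x ≤ v.adicAbv hb y ↔ v.valuation K x ≤ v.valuation K y :=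
  NNReal.coe_le_coe.trans (toNNReal_strictMono hb).le_iff_le

theorem adicAbv_eq_adicAbv_iff {x y : K} :
    v.adicAbv hb x = v.adicAbv hb y ↔ v.valuation K x = v.valuation K y :=
  NNReal.coe_inj.trans (toNNReal_strictMono hb).injective.eq_iff

theorem adicAbv_le_one_iff {x : K} : v.adicAbv hb x ≤ 1 ↔ v.valuation K x ≤ 1 := by
  rw [← map_one (v.adicAbv (K := K) hb), adicAbv_le_adicAbv_iff, map_one]

theorem adicAbv_ne_sq {D : K} (hD : v.valuation K D = WithZero.exp (-1)) (z : K) :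
    v.adicAbv hb D ≠ v.adicAbv hb z ^ 2 := by
  rw [← map_pow, Ne, adicAbv_eq_adicAbv_iff, map_pow, hD]
  exact WithZero.exp_neg_one_ne_sq _

theorem adicAbv_le_one_of_mul_sq_le_one {D : K} (hD : v.valuation K D = WithZero.exp (-1)) {z : K}
    (h : v.adicAbv hb D * v.adicAbv hb z ^ 2 ≤ 1) : v.adicAbv hb z ≤ 1 := by
  rw [← map_pow, ← map_mul, adicAbv_le_one_iff, map_mul, map_pow, hD] at h
  rw [adicAbv_le_one_iff]
  exact WithZero.le_one_of_exp_neg_one_mul_sq_le_one h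

end IsDedekindDomain.HeightOneSpectrum

namespace IsDiscreteValuationRing

open IsDedekindDomain HeightOneSpectrum

variable {O K : Type*} [CommRing O] [IsDomain O] [IsDiscreteValuationRing O] [Field K]
  [Algebra O K] [IsFractionRing O K]

theorem mem_range_algebraMap_iff_valuation_le_one {x : K} :
    x ∈ (algebraMap O K).range ↔ (maximalIdeal O).valuation K x ≤ 1 :=
  ⟨by rintro ⟨a, rfl⟩; exact valuation_le_one _ a, exists_lift_of_le_one⟩

theorem valuation_algebraMap_of_irreducible {d : O} (hd : Irreducible d) :
    (maximalIdeal O).valuation K (algebraMap O K d) = WithZero.exp (-1) := by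
  rw [valuation_of_algebraMap]
  exact intValuation_singleton _ hd.ne_zero ((irreducible_iff_uniformizer d).mp hd)

end IsDiscreteValuationRing

open IsDedekindDomain HeightOneSpectrum IsDiscreteValuationRing in
theorem coeffs_integral_of_norm_form_integral {O K : Type*} [CommRing O] [IsDomain O]
    [IsDiscreteValuationRing O] [Field K] [Algebra O K] [IsFractionRing O K]
    (D : K) (hD : ∃ d : O, Irreducible d ∧ algebraMap O K d = D)
    (A B : Polynomial K)
    (h : ∀ i, (A ^ 2 - Polynomial.C D * B ^ 2).coeff i ∈ (algebraMap O K).range) :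
    (∀ i, A.coeff i ∈ (algebraMap O K).range) ∧
      (∀ i, B.coeff i ∈ (algebraMap O K).range) := by
  obtain ⟨d, hd, rfl⟩ := hD
  have hb : (1 : NNReal) < 2 := one_lt_two
  have hvD := valuation_algebraMap_of_irreducible (K := K) hd
  simp only [mem_range_algebraMap_iff_valuation_le_one, ← adicAbv_le_one_iff _ hb] at h ⊢
  exact Polynomial.coeff_le_one_of_coeff_sq_sub_C_mul_sq_le_one (isNonarchimedean_adicAbv _ hb)
    (adicAbv_ne_sq _ hb hvD) (fun _ => adicAbv_le_one_of_mul_sq_le_one _ hb hvD) h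
end

section
/- Let d be a non-negative integer. Suppose that G[2] is finite, that G/2G is finite with Nat.card (G/2G) = 2^(2d) · Nat.card G[2], that the kernel G'[φ'] is finite, and that Nat.card G[2] · (Nat.card (G'[φ'] / φ(G[ε])))² · Nat.card (G[ε] / ε(G[2])) = 2⁴. Then the quotients G'/φ(G) and G/φ'(G') are finite and Nat.card (G'/φ(G)) · Nat.card (G/φ'(G')) = 2^(2+d). -/
/-!
Write `ε = φ' ∘ φ`. For `f : A → B` and `g : B → C`, splitting `[B : f A]` at `ker g` gives
`[B : f A] · [C : g B] = [ker g : f (ker (g ∘ f))] · [C : g (f A)]`. Applied to `(φ, φ')` and to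
`(ε, ε)`, where `ε ∘ ε = 2`, this yields
`([G' : φ G] · [G : φ' G'])² = m² · [G : ε G]² = m² · n · [G : 2G] = 2^(4 + 2d)`,
with `m` and `n` the two quotient orders in the hypothesis.
-/

namespace AddSubgroup

variable {A B C : Type*} [AddCommGroup A] [AddCommGroup B] [AddCommGroup C]

theorem index_range_eq_relIndex_mul_relIndex (f : A →+ B) (g : B →+ C) :
    f.range.index =
      (f.range.map g).relIndex g.range * (map f (g.comp f).ker).relIndex g.ker := by
  rw [← relIndex_mul_index (le_comap_map g f.range), index_comap, comap_map_eq, relIndex_sup_left,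
    ← AddMonoidHom.comap_ker, map_comap_eq, inf_relIndex_right, mul_comm]

theorem index_range_mul_index_range (f : A →+ B) (g : B →+ C) :
    f.range.index * g.range.index =
      (map f (g.comp f).ker).relIndex g.ker * (g.comp f).range.index := by
  rw [index_range_eq_relIndex_mul_relIndex f g, mul_right_comm,
    relIndex_mul_index (map_le_range g f.range), AddMonoidHom.map_range, mul_comm]

end AddSubgroup

theorem local_card_bound_general {G G' : Type*} [AddCommGroup G] [AddCommGroup G']
    (φ : G →+ G') (φ' : G' →+ G)
    (hε : (φ'.comp φ).comp (φ'.comp φ) = 2 • AddMonoidHom.id G)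
    (d : ℕ)
    (hPhi : Nat.card (G ⧸ (2 • AddMonoidHom.id G).range) =
      2 ^ (2 * d) * Nat.card (AddMonoidHom.ker (2 • AddMonoidHom.id G)))
    (hcard :
      Nat.card (AddMonoidHom.ker (2 • AddMonoidHom.id G)) *
        Nat.card (φ'.ker ⧸
          ((AddSubgroup.map φ (AddMonoidHom.ker (φ'.comp φ))).addSubgroupOf φ'.ker)) ^ 2 *
        Nat.card ((AddMonoidHom.ker (φ'.comp φ)) ⧸
          ((AddSubgroup.map (φ'.comp φ) (AddMonoidHom.ker (2 • AddMonoidHom.id G))).addSubgroupOf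
            (AddMonoidHom.ker (φ'.comp φ)))) = 2 ^ 4) :
    Finite (G' ⧸ φ.range) ∧ Finite (G ⧸ φ'.range) ∧
      Nat.card (G' ⧸ φ.range) * Nat.card (G ⧸ φ'.range) = 2 ^ (2 + d) := by
  have hφ := AddSubgroup.index_range_mul_index_range φ φ'
  have hε2 := AddSubgroup.index_range_mul_index_range (φ'.comp φ) (φ'.comp φ)
  rw [hε] at hε2
  have hsq : (φ.range.index * φ'.range.index) ^ 2 = (2 ^ (2 + d)) ^ 2 :=
    calc (φ.range.index * φ'.range.index) ^ 2
        = _ ^ 2 * ((φ'.comp φ).range.index * (φ'.comp φ).range.index) := by rw [hφ]; ring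
      _ = 2 ^ 4 * 2 ^ (2 * d) := by
        rw [hε2, AddSubgroup.index, hPhi, ← hcard]
        simp only [AddSubgroup.relIndex, AddSubgroup.index]
        ring
      _ = (2 ^ (2 + d)) ^ 2 := by ring
  have hprod : φ.range.index * φ'.range.index = 2 ^ (2 + d) :=
    Nat.pow_left_injective two_ne_zero hsq
  -- `Nat.card` of an infinite type is `0`, so finiteness follows from the product being nonzero.
  have hne : φ.range.index ≠ 0 ∧ φ'.range.index ≠ 0 :=
    mul_ne_zero_iff.mp (hprod ▸ pow_ne_zero _ two_ne_zero)
  exact ⟨Nat.finite_of_card_ne_zero hne.1, Nat.finite_of_card_ne_zero hne.2, hprod⟩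

theorem local_card_bound {G G' : Type*} [AddCommGroup G] [AddCommGroup G']
    (φ : G →+ G') (φ' : G' →+ G)
    (hε : (φ'.comp φ).comp (φ'.comp φ) = 2 • AddMonoidHom.id G)
    (d : ℕ)
    (h2tor : Finite (AddMonoidHom.ker (2 • AddMonoidHom.id G)))
    (h2quot : Finite (G ⧸ (2 • AddMonoidHom.id G).range))
    (hPhi : Nat.card (G ⧸ (2 • AddMonoidHom.id G).range) =
      2 ^ (2 * d) * Nat.card (AddMonoidHom.ker (2 • AddMonoidHom.id G)))
    (hker : Finite φ'.ker)
    (hcard :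
      Nat.card (AddMonoidHom.ker (2 • AddMonoidHom.id G)) *
        Nat.card (φ'.ker ⧸
          ((AddSubgroup.map φ (AddMonoidHom.ker (φ'.comp φ))).addSubgroupOf φ'.ker)) ^ 2 *
        Nat.card ((AddMonoidHom.ker (φ'.comp φ)) ⧸
          ((AddSubgroup.map (φ'.comp φ) (AddMonoidHom.ker (2 • AddMonoidHom.id G))).addSubgroupOf
            (AddMonoidHom.ker (φ'.comp φ)))) = 2 ^ 4) :
    Finite (G' ⧸ φ.range) ∧ Finite (G ⧸ φ'.range) ∧
      Nat.card (G' ⧸ φ.range) * Nat.card (G ⧸ φ'.range) = 2 ^ (2 + d) :=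
  local_card_bound_general φ φ' hε d hPhi hcard
end

section
/- Let n be a natural number. If 8n + 11 is a prime number and the absolute value of the integer 256n² − 2912n − 2087 is a prime number, then 3 divides n. -/
theorem three_dvd_of_primes (n : ℕ)
    (hq : Nat.Prime (8 * n + 11))
    (hr : Nat.Prime (256 * (n : ℤ) ^ 2 - 2912 * (n : ℤ) - 2087).natAbs) :
    3 ∣ n := by
  have h3 : n % 3 = 0 ∨ n % 3 = 1 ∨ n % 3 = 2 := by omega
  rcases h3 with h | h | h
  · omega
  · -- 3 divides the quadratic expression
    obtain ⟨k, hk⟩ : ∃ k, n = 3 * k + 1 := ⟨n / 3, by omega⟩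
    have hd : (3 : ℤ) ∣ (256 * (n : ℤ) ^ 2 - 2912 * (n : ℤ) - 2087) := by
      subst hk
      refine ⟨768 * (k : ℤ) ^ 2 - 2400 * k - 1581, by push_cast; ring⟩
    have hd' : 3 ∣ (256 * (n : ℤ) ^ 2 - 2912 * (n : ℤ) - 2087).natAbs := by
      have := Int.natAbs_dvd_natAbs.mpr hd
      simpa using this
    have h3' : (256 * (n : ℤ) ^ 2 - 2912 * (n : ℤ) - 2087).natAbs = 3 := by
      rcases (hr.eq_one_or_self_of_dvd 3 hd') with h1 | h2
      · omega
      · omega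
    obtain ⟨m, hm⟩ : ∃ m : ℤ, (n : ℤ) ^ 2 = m := ⟨_, rfl⟩
    rcases Int.natAbs_eq_iff.mp h3' with he | he <;> rw [hm] at he <;> omega
  · exfalso
    have hd : 3 ∣ 8 * n + 11 := by omega
    rcases hq.eq_one_or_self_of_dvd 3 hd with h1 | h2 <;> omega
end
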